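/- A generalized complex structure on a finite-dimensional real vector space V is complex if and only if it is both B-complex and β-complex. -/
import Mathlib


open Module LinearMap

noncomputable def gcPair (V : Type*) [AddCommGroup V] [Module ℝ V]
    (x y : V × Module.Dual ℝ V) : ℝ :=
  -(1/2) * (x.2 y.1 + y.2 x.1)

noncomputable def IsGCS (V : Type*) [AddCommGroup V] [Module ℝ V]
    (J : (V × Module.Dual ℝ V) →ₗ[ℝ] (V × Module.Dual ℝ V)) : Prop :=
  J ∘ₗ J = -LinearMap.id ∧ ∀ x y, gcPair V (J x) (J y) = gcPair V x y

section Blocks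

variable (V : Type*) [AddCommGroup V] [Module ℝ V]

noncomputable def blk1 (J : (V × Module.Dual ℝ V) →ₗ[ℝ] (V × Module.Dual ℝ V)) :
    V →ₗ[ℝ] V :=
  (LinearMap.fst ℝ V (Module.Dual ℝ V)) ∘ₗ J ∘ₗ (LinearMap.inl ℝ V (Module.Dual ℝ V))

noncomputable def blk2 (J : (V × Module.Dual ℝ V) →ₗ[ℝ] (V × Module.Dual ℝ V)) :
    Module.Dual ℝ V →ₗ[ℝ] V :=
  (LinearMap.fst ℝ V (Module.Dual ℝ V)) ∘ₗ J ∘ₗ (LinearMap.inr ℝ V (Module.Dual ℝ V))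

noncomputable def blk3 (J : (V × Module.Dual ℝ V) →ₗ[ℝ] (V × Module.Dual ℝ V)) :
    V →ₗ[ℝ] Module.Dual ℝ V :=
  (LinearMap.snd ℝ V (Module.Dual ℝ V)) ∘ₗ J ∘ₗ (LinearMap.inl ℝ V (Module.Dual ℝ V))

noncomputable def blk4 (J : (V × Module.Dual ℝ V) →ₗ[ℝ] (V × Module.Dual ℝ V)) :
    Module.Dual ℝ V →ₗ[ℝ] Module.Dual ℝ V :=
  (LinearMap.snd ℝ V (Module.Dual ℝ V)) ∘ₗ J ∘ₗ (LinearMap.inr ℝ V (Module.Dual ℝ V))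

/-- The endomorphism of `V ⊕ V*` with block matrix `[[A,B],[C,D]]`. -/
noncomputable def ofBlocks (A : V →ₗ[ℝ] V) (B : Module.Dual ℝ V →ₗ[ℝ] V)
    (C : V →ₗ[ℝ] Module.Dual ℝ V) (D : Module.Dual ℝ V →ₗ[ℝ] Module.Dual ℝ V) :
    (V × Module.Dual ℝ V) →ₗ[ℝ] (V × Module.Dual ℝ V) :=
  LinearMap.prod
    (A ∘ₗ LinearMap.fst ℝ V (Module.Dual ℝ V) + B ∘ₗ LinearMap.snd ℝ V (Module.Dual ℝ V))
    (C ∘ₗ LinearMap.fst ℝ V (Module.Dual ℝ V) + D ∘ₗ LinearMap.snd ℝ V (Module.Dual ℝ V))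

/-- Skew-symmetry for a map `V → V*`. -/
def SkewF (B : V →ₗ[ℝ] Module.Dual ℝ V) : Prop := ∀ u v : V, B u v = -(B v u)

/-- Skew-symmetry for a map `V* → V`. -/
def SkewB (β : Module.Dual ℝ V →ₗ[ℝ] V) : Prop :=
  ∀ f g : Module.Dual ℝ V, f (β g) = -(g (β f))

/-- The B-field automorphism `[[1,0],[B,1]]`. -/
noncomputable def calB (B : V →ₗ[ℝ] Module.Dual ℝ V) :
    (V × Module.Dual ℝ V) →ₗ[ℝ] (V × Module.Dual ℝ V) :=
  ofBlocks V LinearMap.id 0 B LinearMap.id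

/-- The β-field automorphism `[[1,β],[0,1]]`. -/
noncomputable def calBeta (β : Module.Dual ℝ V →ₗ[ℝ] V) :
    (V × Module.Dual ℝ V) →ₗ[ℝ] (V × Module.Dual ℝ V) :=
  ofBlocks V LinearMap.id β 0 LinearMap.id

/-- A GCS is complex if it equals `[[J,0],[0,-J*]]` for a complex structure `J` on `V`. -/
noncomputable def IsComplexGCS (J : (V × Module.Dual ℝ V) →ₗ[ℝ] (V × Module.Dual ℝ V)) :
    Prop :=
  ∃ Jc : V →ₗ[ℝ] V, Jc ∘ₗ Jc = -LinearMap.id ∧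
    J = ofBlocks V Jc 0 0 (-(Jc.dualMap))

/-- A GCS is symplectic if it equals `[[0,-ω⁻¹],[ω,0]]` for a nondegenerate
skew-symmetric `ω : V → V*`. -/
noncomputable def IsSymplecticGCS (J : (V × Module.Dual ℝ V) →ₗ[ℝ] (V × Module.Dual ℝ V)) :
    Prop :=
  ∃ (ω : V →ₗ[ℝ] Module.Dual ℝ V) (ω' : Module.Dual ℝ V →ₗ[ℝ] V),
    SkewF V ω ∧ ω' ∘ₗ ω = LinearMap.id ∧ ω ∘ₗ ω' = LinearMap.id ∧
      J = ofBlocks V 0 (-ω') ω 0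

/-- B-field transform of a complex GCS. -/
noncomputable def IsBComplex (J : (V × Module.Dual ℝ V) →ₗ[ℝ] (V × Module.Dual ℝ V)) :
    Prop :=
  ∃ B : V →ₗ[ℝ] Module.Dual ℝ V, SkewF V B ∧
    ∃ J₀, IsComplexGCS V J₀ ∧ J = calB V B ∘ₗ J₀ ∘ₗ calB V (-B)

/-- β-field transform of a complex GCS. -/
noncomputable def IsBetaComplex (J : (V × Module.Dual ℝ V) →ₗ[ℝ] (V × Module.Dual ℝ V)) :
    Prop :=
  ∃ β : Module.Dual ℝ V →ₗ[ℝ] V, SkewB V β ∧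
    ∃ J₀, IsComplexGCS V J₀ ∧ J = calBeta V β ∘ₗ J₀ ∘ₗ calBeta V (-β)

/-- B-field transform of a symplectic GCS. -/
noncomputable def IsBSymplectic (J : (V × Module.Dual ℝ V) →ₗ[ℝ] (V × Module.Dual ℝ V)) :
    Prop :=
  ∃ B : V →ₗ[ℝ] Module.Dual ℝ V, SkewF V B ∧
    ∃ J₀, IsSymplecticGCS V J₀ ∧ J = calB V B ∘ₗ J₀ ∘ₗ calB V (-B)

/-- β-field transform of a symplectic GCS. -/
noncomputable def IsBetaSymplectic (J : (V × Module.Dual ℝ V) →ₗ[ℝ] (V × Module.Dual ℝ V)) :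
    Prop :=
  ∃ β : Module.Dual ℝ V →ₗ[ℝ] V, SkewB V β ∧
    ∃ J₀, IsSymplecticGCS V J₀ ∧ J = calBeta V β ∘ₗ J₀ ∘ₗ calBeta V (-β)

end Blocks

section Aux

variable (V : Type*) [AddCommGroup V] [Module ℝ V]

lemma ofBlocks_apply (A : V →ₗ[ℝ] V) (B : Module.Dual ℝ V →ₗ[ℝ] V)
    (C : V →ₗ[ℝ] Module.Dual ℝ V) (D : Module.Dual ℝ V →ₗ[ℝ] Module.Dual ℝ V)
    (x : V × Module.Dual ℝ V) :
    ofBlocks V A B C D x = (A x.1 + B x.2, C x.1 + D x.2) := rfl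

lemma blk3_ofBlocks (A : V →ₗ[ℝ] V) (B : Module.Dual ℝ V →ₗ[ℝ] V)
    (C : V →ₗ[ℝ] Module.Dual ℝ V) (D : Module.Dual ℝ V →ₗ[ℝ] Module.Dual ℝ V) :
    blk3 V (ofBlocks V A B C D) = C := by
  ext v
  simp [blk3, ofBlocks]

lemma calB_conj (B : V →ₗ[ℝ] Module.Dual ℝ V) (Jc : V →ₗ[ℝ] V) :
    calB V B ∘ₗ ofBlocks V Jc 0 0 (-(Jc.dualMap)) ∘ₗ calB V (-B)
      = ofBlocks V Jc 0 (B ∘ₗ Jc + Jc.dualMap ∘ₗ B) (-(Jc.dualMap)) := by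
  ext x <;>
    simp [calB, ofBlocks_apply, map_neg, map_add, sub_eq_add_neg] <;> abel

lemma calBeta_conj (β : Module.Dual ℝ V →ₗ[ℝ] V) (Jc : V →ₗ[ℝ] V) :
    calBeta V β ∘ₗ ofBlocks V Jc 0 0 (-(Jc.dualMap)) ∘ₗ calBeta V (-β)
      = ofBlocks V Jc (-(Jc ∘ₗ β + β ∘ₗ Jc.dualMap)) 0 (-(Jc.dualMap)) := by
  ext x <;>
    simp [calBeta, ofBlocks_apply, map_neg, map_add, sub_eq_add_neg] <;> abel

lemma calB_zero : calB V 0 = LinearMap.id := by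
  ext x <;> simp [calB, ofBlocks_apply]

lemma calB_negZero : calB V (-0) = LinearMap.id := by
  ext x <;> simp [calB, ofBlocks_apply]

lemma calBeta_zero : calBeta V 0 = LinearMap.id := by
  ext x <;> simp [calBeta, ofBlocks_apply]

lemma calBeta_negZero : calBeta V (-0) = LinearMap.id := by
  ext x <;> simp [calBeta, ofBlocks_apply]

end Aux

theorem complex_iff_bComplex_and_betaComplex
    (V : Type*) [AddCommGroup V] [Module ℝ V] [FiniteDimensional ℝ V]
    (J : (V × Module.Dual ℝ V) →ₗ[ℝ] (V × Module.Dual ℝ V)) (hJ : IsGCS V J) :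
    IsComplexGCS V J ↔ IsBComplex V J ∧ IsBetaComplex V J := by
  constructor
  · intro h
    refine ⟨⟨0, fun u v => by simp, J, h, ?_⟩, ⟨0, fun f g => by simp, J, h, ?_⟩⟩
    · rw [calB_zero, calB_negZero]; simp
    · rw [calBeta_zero, calBeta_negZero]; simp
  · rintro ⟨⟨B, hB, J₀, ⟨Jc, hJc, rfl⟩, hJB⟩, ⟨β, hβ, J₀', ⟨K, hK, rfl⟩, hJβ⟩⟩
    have hJform : J = ofBlocks V Jc 0 (B ∘ₗ Jc + Jc.dualMap ∘ₗ B) (-(Jc.dualMap)) := by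
      rw [hJB, calB_conj]
    have hJform' : J = ofBlocks V K (-(K ∘ₗ β + β ∘ₗ K.dualMap)) 0 (-(K.dualMap)) := by
      rw [hJβ, calBeta_conj]
    have h3 : B ∘ₗ Jc + Jc.dualMap ∘ₗ B = 0 := by
      have := congrArg (blk3 V) (hJform.symm.trans hJform')
      simpa [blk3_ofBlocks] using this
    exact ⟨Jc, hJc, by rw [hJform, h3]⟩
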